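/- arXiv:2411.12339 — 2 statements merged into one kernel-verified Lean document; each statement's English description precedes it below -/
import Mathlib

section
/- Let f = Σ_{i=0}^{10} a_{10-i} x^i ∈ F_{2^n}[x] be a polynomial of degree 10 (a_0 ≠ 0) such that (i) a_1·a_3 ≠ 0 and (ii) a_0⁴a_1²a_4² + a_0⁶a_5² + a_1⁷a_3 + a_0²a_1⁴a_3² + a_0⁴a_1²a_3a_5 + a_0⁶a_3a_7 ≠ 0. Set α = a_1/a_0 and g = L_αf. Then g is a Morse polynomial; explicitly: g has odd degree (equal to 3), the derivative g' and the second Hasse–Schmidt derivative g^{[2]} have no common root in an algebraic closure of F_{2^n}, and g takes distinct values at distinct roots of g' in an algebraic closure. -/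
open Polynomial

theorem stmt_4 (n : ℕ)
    (a0 a1 a2 a3 a4 a5 a6 a7 a8 a9 a10 : GaloisField 2 n)
    (f : Polynomial (GaloisField 2 n))
    (hf : f = C a0 * X ^ 10 + C a1 * X ^ 9 + C a2 * X ^ 8 + C a3 * X ^ 7 + C a4 * X ^ 6
      + C a5 * X ^ 5 + C a6 * X ^ 4 + C a7 * X ^ 3 + C a8 * X ^ 2 + C a9 * X + C a10)
    (ha0 : a0 ≠ 0)
    (h1 : a1 * a3 ≠ 0)
    (h2 : a0 ^ 4 * a1 ^ 2 * a4 ^ 2 + a0 ^ 6 * a5 ^ 2 + a1 ^ 7 * a3 + a0 ^ 2 * a1 ^ 4 * a3 ^ 2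
      + a0 ^ 4 * a1 ^ 2 * a3 * a5 + a0 ^ 6 * a3 * a7 ≠ 0)
    (α : GaloisField 2 n) (hα : α = a1 / a0)
    -- `g = L_α f`, the unique polynomial with `g(x(x+α)) = f(x+α) + f(x)`
    (g : Polynomial (GaloisField 2 n))
    (hg : g.comp (X ^ 2 + C α * X) = f.comp (X + C α) + f) :
    -- `g` is Morse: odd degree (namely 3), nondegenerate critical points,
    -- and distinct critical values
    g.degree = 3 ∧
    (∀ x : AlgebraicClosure (GaloisField 2 n),
      ¬(aeval x (derivative g) = 0 ∧ aeval x (hasseDeriv 2 g) = 0)) ∧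
    (∀ x y : AlgebraicClosure (GaloisField 2 n),
      aeval x (derivative g) = 0 → aeval y (derivative g) = 0 → x ≠ y →
        aeval x g ≠ aeval y g) := by
  have ha1 : a1 ≠ 0 := fun h => h1 (by simp [h])
  have ha3 : a3 ≠ 0 := fun h => h1 (by simp [h])
  have hα' : a1 = a0 * α := by rw [hα]; field_simp
  have hαne : α ≠ 0 := fun h => ha1 (by rw [hα', h, mul_zero])
  have htwoK : (2 : GaloisField 2 n) = 0 := by
    have := CharP.cast_eq_zero (GaloisField 2 n) 2
    simpa using this
  have htwoP : (2 : Polynomial (GaloisField 2 n)) = 0 := by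
    rw [← map_ofNat (C : GaloisField 2 n →+* Polynomial (GaloisField 2 n)) 2, htwoK, map_zero]
  set c3 : GaloisField 2 n := a3 * α with hc3
  set c2 : GaloisField 2 n := a4 * α ^ 2 + a5 * α with hc2
  set c1 : GaloisField 2 n := a0 * α ^ 8 + a3 * α ^ 5 + a5 * α ^ 3 + a7 * α with hc1
  set c0 : GaloisField 2 n := a0 * α ^ 10 + a0 * α * α ^ 9 + a2 * α ^ 8 + a3 * α ^ 7
    + a4 * α ^ 6 + a5 * α ^ 5 + a6 * α ^ 4 + a7 * α ^ 3 + a8 * α ^ 2 + a9 * α with hc0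
  have hG : (C c3 * X ^ 3 + C c2 * X ^ 2 + C c1 * X + C c0).comp (X ^ 2 + C α * X)
      = f.comp (X + C α) + f := by
    rw [hf, hα', hc3, hc2, hc1, hc0]
    simp only [add_comp, mul_comp, pow_comp, X_comp, C_comp, map_add, map_mul, map_pow]
    linear_combination htwoP * (-1 * (C a10) + -1 * X * (C a9) + -1 * X * (C α) * (C a8) + -1 * X * (C α) ^ 2 * (C a7) + -2 * X * (C α) ^ 3 * (C a6) + -2 * X * (C α) ^ 4 * (C a5) + -3 * X * (C α) ^ 5 * (C a4) + -3 * X * (C α) ^ 6 * (C a3) + -4 * X * (C α) ^ 7 * (C a2) + -9 * X * (C α) ^ 9 * (C a0) + -1 * X ^ 2 * (C a8) + -1 * X ^ 2 * (C α) * (C a7) + -3 * X ^ 2 * (C α) ^ 2 * (C a6) + -4 * X ^ 2 * (C α) ^ 3 * (C a5) + -7 * X ^ 2 * (C α) ^ 4 * (C a4) + -10 * X ^ 2 * (C α) ^ 5 * (C a3) + -14 * X ^ 2 * (C α) ^ 6 * (C a2) + -40 * X ^ 2 * (C α) ^ 8 * (C a0) + -1 * X ^ 3 * (C a7) + -2 *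 X ^ 3 * (C α) * (C a6) + -4 * X ^ 3 * (C α) ^ 2 * (C a5) + -9 * X ^ 3 * (C α) ^ 3 * (C a4) + -17 * X ^ 3 * (C α) ^ 4 * (C a3) + -28 * X ^ 3 * (C α) ^ 5 * (C a2) + -102 * X ^ 3 * (C α) ^ 7 * (C a0) + -1 * X ^ 4 * (C a6) + -2 * X ^ 4 * (C α) * (C a5) + -7 * X ^ 4 * (C α) ^ 2 * (C a4) + -16 * X ^ 4 * (C α) ^ 3 * (C a3) + -35 * X ^ 4 * (C α) ^ 4 * (C a2) + -168 * X ^ 4 * (C α) ^ 6 * (C a0) + -1 * X ^ 5 * (C a5) + -3 * X ^ 5 * (C α) * (C a4) + -9 * X ^ 5 * (C α) ^ 2 * (C a3) + -28 * X ^ 5 * (C α) ^ 3 * (C a2) + -189 * X ^ 5 * (C α) ^ 5 * (C a0) + -1 * X ^ 6 * (C a4) + -3 * X ^ 6 * (C α) * (C a3) + -14 * X ^ 6 * (C α) ^ 2 * (C a2) + -147 * X ^ 6 * (C α) ^ 4 * (C a0) + -1 * X ^ 7 * (C a3) + -4 * X ^ 7 * (C α) * (C a2) + -78 * X ^ 7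 * (C α) ^ 3 * (C a0) + -1 * X ^ 8 * (C a2) + -27 * X ^ 8 * (C α) ^ 2 * (C a0) + -6 * X ^ 9 * (C α) * (C a0) + -1 * X ^ 10 * (C a0))
  have hgG : g = C c3 * X ^ 3 + C c2 * X ^ 2 + C c1 * X + C c0 := by
    have h0 : (g - (C c3 * X ^ 3 + C c2 * X ^ 2 + C c1 * X + C c0)).comp (X ^ 2 + C α * X)
        = 0 := by rw [sub_comp, hg, hG, sub_self]
    rcases comp_eq_zero_iff.mp h0 with h | ⟨-, hq⟩
    · exact sub_eq_zero.mp h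
    · exfalso
      have := congrArg (fun p => coeff p 2) hq
      simp at this
  have hc3ne : c3 ≠ 0 := mul_ne_zero ha3 hαne
  have h3K : (3 : GaloisField 2 n) = 1 := by
    rw [show (3 : GaloisField 2 n) = 2 + 1 by norm_num, htwoK, zero_add]
  have hd : derivative g = C c3 * X ^ 2 + C c1 := by
    rw [hgG]
    rw [show (C c1 * X : Polynomial (GaloisField 2 n)) = C c1 * X ^ 1 by ring]
    simp only [derivative_add, derivative_C_mul_X_pow, derivative_C, add_zero]
    push_cast
    simp [htwoK, h3K]
  have hh : hasseDeriv 2 g = C c3 * X + C c2 := by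
    rw [hgG]
    rw [show (C c1 * X : Polynomial (GaloisField 2 n)) = C c1 * X ^ 1 by ring,
      show (C c0 : Polynomial (GaloisField 2 n)) = C c0 * X ^ 0 by ring]
    simp only [C_mul_X_pow_eq_monomial, map_add, hasseDeriv_monomial]
    norm_num
    simp [htwoK, h3K, monomial_zero_left, ← C_mul_X_pow_eq_monomial]
  have hne : c2 ^ 2 + c1 * c3 ≠ 0 := by
    intro h0
    apply h2
    rw [hα']
    have key : a0 ^ 6 * (c2 ^ 2 + c1 * c3)
        = α ^ 2 * (a0 ^ 4 * (a0 * α) ^ 2 * a4 ^ 2 + a0 ^ 6 * a5 ^ 2 + (a0 * α) ^ 7 * a3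
          + a0 ^ 2 * (a0 * α) ^ 4 * a3 ^ 2 + a0 ^ 4 * (a0 * α) ^ 2 * a3 * a5
          + a0 ^ 6 * a3 * a7) := by
      rw [hc1, hc2, hc3]
      linear_combination htwoK * (α ^ 3 * a0 ^ 6 * a4 * a5)
    have hz : α ^ 2 * (a0 ^ 4 * (a0 * α) ^ 2 * a4 ^ 2 + a0 ^ 6 * a5 ^ 2 + (a0 * α) ^ 7 * a3
          + a0 ^ 2 * (a0 * α) ^ 4 * a3 ^ 2 + a0 ^ 4 * (a0 * α) ^ 2 * a3 * a5
          + a0 ^ 6 * a3 * a7) = 0 := by rw [← key, h0, mul_zero]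
    exact (mul_eq_zero.mp hz).resolve_left (pow_ne_zero 2 hαne)
  set L := AlgebraicClosure (GaloisField 2 n)
  set φ := algebraMap (GaloisField 2 n) L with hφ
  have htwoL : (2 : L) = 0 := by
    rw [← map_ofNat φ 2, htwoK, map_zero]
  refine ⟨?_, ?_, ?_⟩
  · rw [hgG]; exact degree_cubic hc3ne
  · rintro x ⟨hx1, hx2⟩
    rw [hd] at hx1
    rw [hh] at hx2
    simp only [map_add, map_mul, map_pow, aeval_C, aeval_X] at hx1 hx2
    apply hne
    have hz : φ (c2 ^ 2 + c1 * c3) = φ 0 := by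
      rw [map_zero]
      simp only [map_add, map_mul, map_pow]
      linear_combination φ c3 * hx1 + (φ c2 - φ c3 * x) * hx2
    exact φ.injective hz
  · intro x y hx hy hxy
    exfalso
    apply hxy
    rw [hd] at hx hy
    simp only [map_add, map_mul, map_pow, aeval_C, aeval_X] at hx hy
    have hφc3 : φ c3 ≠ 0 := fun h => hc3ne (φ.injective (by rw [h, map_zero]))
    have hsq : φ c3 * ((x + y) * (x + y)) = 0 := by
      linear_combination hx + hy + (x * y * φ c3 - φ c1) * htwoL
    have hsum : x + y = 0 :=
      mul_self_eq_zero.mp ((mul_eq_zero.mp hsq).resolve_left hφc3)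
    linear_combination hsum - y * htwoL
end

section
/- Let f = Σ_{i=0}^{10} a_{10-i} x^i ∈ F_{2^n}[x] be a monic polynomial of degree 10 with a_1 = a_3 = 0, let α ∈ F_{2^n}\{0}, set b := (α⁵ + αa_4 + a_5)/α and c := (α²a_5 + a_7)/α, and suppose c ≠ 0 and that R_3(x) := x³ + bx² + c² factors over F_{2^n} as a product of three linear factors. Let t be transcendental over F_{2^n} and let u be any root of L_αf(X) − t in an algebraic closure of F_{2^n}(t). Then the polynomial L_αf(X) − t splits completely over the field F_{2^n}(t)(u) = F_{2^n}(u); that is, adjoining a single root of L_αf(X) − t to F_{2^n}(t) already yields its splitting field. -/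
open Polynomial

set_option synthInstance.maxHeartbeats 1000000
set_option maxHeartbeats 1000000

theorem factor_key_stmt8 {K : Type*} [Field K] (A B Cv D T U S1 S2 S3 : K)
    (h2 : (2 : K) = 0)
    (H1 : S1 + S2 + S3 = 0) (H2 : S1*S2 + S1*S3 + S2*S3 = B) (H3 : S1*S2*S3 = Cv)
    (H4 : A^2*U^4 + A^2*B*U^2 + A^2*Cv*U + D = T) :
    C (A^2) * X^4 + C (A^2*B) * X^2 + C (A^2*Cv) * X + C D - C T
      = C (A^2) * ((X - C U) * ((X - C (U+S1)) * ((X - C (U+S2)) * (X - C (U+S3))))) := by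
  have h2P : (2 : Polynomial K) = 0 := by
    rw [← map_ofNat (C : K →+* Polynomial K) 2, h2, map_zero]
  have H1C := congrArg (C : K → Polynomial K) H1
  have H2C := congrArg (C : K → Polynomial K) H2
  have H3C := congrArg (C : K → Polynomial K) H3
  have H4C := congrArg (C : K → Polynomial K) H4
  simp only [map_add, map_mul, map_pow, map_zero] at H1C H2C H3C H4C
  simp only [map_add, map_mul, map_pow]
  linear_combination (norm := ring_nf) H4C
    + ((1 : Polynomial K)*(C U)^2*(C A)^2 + (-1 : Polynomial K)*(X)^2*(C A)^2) * H2C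
    + ((1 : Polynomial K)*(C U)*(C A)^2 + (-1 : Polynomial K)*(X)*(C A)^2) * H3C
    + ((-2 : Polynomial K)*(C U)*(C S1)*(C S2)*(C A)^2 + (-2 : Polynomial K)*(C U)^2*(C S2)*(C A)^2 + (-2 : Polynomial K)*(C U)^2*(C S1)*(C A)^2 + (-1 : Polynomial K)*(C U)^3*(C A)^2 + (2 : Polynomial K)*(X)*(C S1)*(C S2)*(C A)^2 + (2 : Polynomial K)*(X)*(C U)*(C S2)*(C A)^2 + (2 : Polynomial K)*(X)*(C U)*(C S1)*(C A)^2 + (3 : Polynomial K)*(X)*(C U)^2*(C A)^2 + (-3 : Polynomial K)*(X)^2*(C U)*(C A)^2 + (1 : Polynomial K)*(X)^3*(C A)^2) * H1C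
    + ((1 : Polynomial K)*(C U)*(C S1)*(C S2)^2*(C A)^2 + (1 : Polynomial K)*(C U)*(C S1)^2*(C S2)*(C A)^2 + (1 : Polynomial K)*(C U)^2*(C S2)^2*(C A)^2 + (1 : Polynomial K)*(C U)^2*(C S1)*(C S2)*(C A)^2 + (1 : Polynomial K)*(C U)^2*(C S1)^2*(C A)^2 + (-1 : Polynomial K)*(C U)^4*(C A)^2 + (-1 : Polynomial K)*(X)*(C S1)*(C S2)^2*(C A)^2 + (-1 : Polynomial K)*(X)*(C S1)^2*(C S2)*(C A)^2 + (-1 : Polynomial K)*(X)*(C U)*(C S2)^2*(C A)^2 + (-1 : Polynomial K)*(X)*(C U)*(C S1)*(C S2)*(C A)^2 + (-1 : Polynomial K)*(X)*(C U)*(C S1)^2*(C A)^2 + (2 : Polynomial K)*(X)*(C U)^3*(C A)^2 + (-3 : Polynomial K)*(X)^2*(C U)^2*(C A)^2 + (2 : Polynomial K)*(X)^3*(C U)*(C A)^2) * h2P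

theorem resolvent_roots_stmt8 {F : Type*} [Field F] (b c : F) (hc0 : c ≠ 0) (h2 : (2:F) = 0)
    (hR3 : Splits (X ^ 3 + C b * X ^ 2 + C (c ^ 2))) :
    ∃ s1 s2 s3 : F, s1 + s2 + s3 = 0 ∧ s1*s2 + s1*s3 + s2*s3 = b ∧ s1*s2*s3 = c := by
  have hm : (X ^ 3 + C b * X ^ 2 + C (c ^ 2) : Polynomial F).Monic := by
    monicity!
  have hdeg : (X ^ 3 + C b * X ^ 2 + C (c ^ 2) : Polynomial F).natDegree = 3 := by
    compute_degree!
  obtain ⟨s, hs⟩ := splits_iff_exists_multiset.mp hR3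
  rw [hm.leadingCoeff, C_1, one_mul] at hs
  have hcard : Multiset.card s = 3 := by
    have := congrArg natDegree hs
    rw [hdeg, natDegree_multiset_prod_X_sub_C_eq_card] at this
    exact this.symm
  obtain ⟨r1, r2, r3, rfl⟩ := Multiset.card_eq_three.mp hcard
  simp only [Multiset.insert_eq_cons, Multiset.map_cons, Multiset.map_singleton,
    Multiset.prod_cons, Multiset.prod_singleton] at hs
  have hexp : (X - C r1) * ((X - C r2) * (X - C r3)) =
      X^3 - C (r1+r2+r3) * X^2 + C (r1*r2+r1*r3+r2*r3) * X - C (r1*r2*r3) := by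
    simp only [map_add, map_mul]; ring
  rw [hexp] at hs
  have e2 : b = -(r1+r2+r3) := by
    have h := congrArg (fun p => Polynomial.coeff p 2) hs
    simp only [coeff_add, coeff_sub, coeff_C_mul, coeff_X_pow, coeff_C, coeff_X] at h
    norm_num at h
    linear_combination h
  have e1 : (0:F) = r1*r2+r1*r3+r2*r3 := by
    have h := congrArg (fun p => Polynomial.coeff p 1) hs
    simp only [coeff_add, coeff_sub, coeff_C_mul, coeff_X_pow, coeff_C, coeff_X] at h
    norm_num at h
    linear_combination h
  have e0 : c^2 = -(r1*r2*r3) := by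
    have h := congrArg (fun p => Polynomial.coeff p 0) hs
    simp only [coeff_add, coeff_sub, coeff_C_mul, coeff_X_pow, coeff_C, coeff_X] at h
    norm_num at h
    linear_combination h
  have hprod : r1*r2*r3 ≠ 0 := by
    intro h
    apply hc0
    have hc2 : c^2 = 0 := by rw [e0, h, neg_zero]
    exact pow_eq_zero_iff two_ne_zero |>.mp hc2
  have hr1 : r1 ≠ 0 := fun h => hprod (by simp [h])
  have hr2 : r2 ≠ 0 := fun h => hprod (by simp [h])
  have hr3 : r3 ≠ 0 := fun h => hprod (by simp [h])
  refine ⟨c/r1, c/r2, c/r3, ?_, ?_, ?_⟩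
  · field_simp
    linear_combination (-c) * e1
  · field_simp
    linear_combination (r1+r2+r3) * e0 - (r1*r2*r3) * e2
  · field_simp
    linear_combination e0 - (r1*r2*r3) * h2

theorem L0_comp_stmt8 (n : ℕ) (a2 a4 a5 a6 a7 a8 a9 a10 α : GaloisField 2 n) :
    (C (α^2) * X^4 + C (α^6 + a4*α^2 + a5*α) * X^2 + C (a5*α^3 + a7*α) * X
      + C (α^10 + a2*α^8 + a4*α^6 + a5*α^5 + a6*α^4 + a7*α^3 + a8*α^2 + a9*α)).comp
        (X ^ 2 + C α * X)
    = (X ^ 10 + C a2 * X ^ 8 + C a4 * X ^ 6 + C a5 * X ^ 5 + C a6 * X ^ 4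
      + C a7 * X ^ 3 + C a8 * X ^ 2 + C a9 * X + C a10).comp (X + C α)
      + (X ^ 10 + C a2 * X ^ 8 + C a4 * X ^ 6 + C a5 * X ^ 5 + C a6 * X ^ 4
      + C a7 * X ^ 3 + C a8 * X ^ 2 + C a9 * X + C a10) := by
  have h2 : (2 : GaloisField 2 n) = 0 := by
    exact_mod_cast CharP.cast_eq_zero (GaloisField 2 n) 2
  have h2P : (2 : Polynomial (GaloisField 2 n)) = 0 := by
    rw [← map_ofNat (C : GaloisField 2 n →+* _) 2, h2, map_zero]
  simp only [add_comp, mul_comp, pow_comp, X_comp, C_comp, map_add, map_mul, map_pow]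
  linear_combination (norm := ring_nf)
    ((-1 : Polynomial (GaloisField 2 n))*(C a10)
      + (-1 : Polynomial (GaloisField 2 n))*(X)*(C a9)
      + (-1 : Polynomial (GaloisField 2 n))*(X)*(C α)*(C a8)
      + (-1 : Polynomial (GaloisField 2 n))*(X)*(C α)^2*(C a7)
      + (-2 : Polynomial (GaloisField 2 n))*(X)*(C α)^3*(C a6)
      + (-2 : Polynomial (GaloisField 2 n))*(X)*(C α)^4*(C a5)
      + (-3 : Polynomial (GaloisField 2 n))*(X)*(C α)^5*(C a4)
      + (-4 : Polynomial (GaloisField 2 n))*(X)*(C α)^7*(C a2)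
      + (-5 : Polynomial (GaloisField 2 n))*(X)*(C α)^9
      + (-1 : Polynomial (GaloisField 2 n))*(X)^2*(C a8)
      + (-1 : Polynomial (GaloisField 2 n))*(X)^2*(C α)*(C a7)
      + (-3 : Polynomial (GaloisField 2 n))*(X)^2*(C α)^2*(C a6)
      + (-4 : Polynomial (GaloisField 2 n))*(X)^2*(C α)^3*(C a5)
      + (-7 : Polynomial (GaloisField 2 n))*(X)^2*(C α)^4*(C a4)
      + (-14 : Polynomial (GaloisField 2 n))*(X)^2*(C α)^6*(C a2)
      + (-22 : Polynomial (GaloisField 2 n))*(X)^2*(C α)^8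
      + (-1 : Polynomial (GaloisField 2 n))*(X)^3*(C a7)
      + (-2 : Polynomial (GaloisField 2 n))*(X)^3*(C α)*(C a6)
      + (-4 : Polynomial (GaloisField 2 n))*(X)^3*(C α)^2*(C a5)
      + (-9 : Polynomial (GaloisField 2 n))*(X)^3*(C α)^3*(C a4)
      + (-28 : Polynomial (GaloisField 2 n))*(X)^3*(C α)^5*(C a2)
      + (-59 : Polynomial (GaloisField 2 n))*(X)^3*(C α)^7
      + (-1 : Polynomial (GaloisField 2 n))*(X)^4*(C a6)
      + (-2 : Polynomial (GaloisField 2 n))*(X)^4*(C α)*(C a5)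
      + (-7 : Polynomial (GaloisField 2 n))*(X)^4*(C α)^2*(C a4)
      + (-35 : Polynomial (GaloisField 2 n))*(X)^4*(C α)^4*(C a2)
      + (-104 : Polynomial (GaloisField 2 n))*(X)^4*(C α)^6
      + (-1 : Polynomial (GaloisField 2 n))*(X)^5*(C a5)
      + (-3 : Polynomial (GaloisField 2 n))*(X)^5*(C α)*(C a4)
      + (-28 : Polynomial (GaloisField 2 n))*(X)^5*(C α)^3*(C a2)
      + (-124 : Polynomial (GaloisField 2 n))*(X)^5*(C α)^5
      + (-1 : Polynomial (GaloisField 2 n))*(X)^6*(C a4)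
      + (-14 : Polynomial (GaloisField 2 n))*(X)^6*(C α)^2*(C a2)
      + (-102 : Polynomial (GaloisField 2 n))*(X)^6*(C α)^4
      + (-4 : Polynomial (GaloisField 2 n))*(X)^7*(C α)*(C a2)
      + (-58 : Polynomial (GaloisField 2 n))*(X)^7*(C α)^3
      + (-1 : Polynomial (GaloisField 2 n))*(X)^8*(C a2)
      + (-22 : Polynomial (GaloisField 2 n))*(X)^8*(C α)^2
      + (-5 : Polynomial (GaloisField 2 n))*(X)^9*(C α)
      + (-1 : Polynomial (GaloisField 2 n))*(X)^10) * h2P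

theorem stmt_8 (n : ℕ)
    (a2 a4 a5 a6 a7 a8 a9 a10 : GaloisField 2 n)
    (f : Polynomial (GaloisField 2 n))
    -- `f` is monic of degree 10 with `a₁ = a₃ = 0`
    (hf : f = X ^ 10 + C a2 * X ^ 8 + C a4 * X ^ 6 + C a5 * X ^ 5 + C a6 * X ^ 4
      + C a7 * X ^ 3 + C a8 * X ^ 2 + C a9 * X + C a10)
    (α b c : GaloisField 2 n) (hα : α ≠ 0)
    (hb : b = (α ^ 5 + α * a4 + a5) / α)
    (hc : c = (α ^ 2 * a5 + a7) / α)
    (hc0 : c ≠ 0)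
    -- the cubic resolvent `R₃ = X³ + bX² + c²` splits into linear factors over `F_{2ⁿ}`
    (hR3 : Splits ((X ^ 3 + C b * X ^ 2 + C (c ^ 2)).map (RingHom.id (GaloisField 2 n))))
    -- `L = L_α f`, the unique polynomial with `L(x(x+α)) = f(x+α) + f(x)`
    (L : Polynomial (GaloisField 2 n))
    (hL : L.comp (X ^ 2 + C α * X) = f.comp (X + C α) + f)
    -- `q = L_αf(X) − t` over the rational function field `F_{2ⁿ}(t)`
    (q : Polynomial (RatFunc (GaloisField 2 n)))
    (hq : q = L.map (RatFunc.C) - C RatFunc.X)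
    -- `u` is any root of `q` in an algebraic closure of `F_{2ⁿ}(t)`
    (u : AlgebraicClosure (RatFunc (GaloisField 2 n)))
    (hu : aeval u q = 0) :
    -- `q` splits completely over `F_{2ⁿ}(t)(u)`
    Splits (q.map (algebraMap (RatFunc (GaloisField 2 n))
      (IntermediateField.adjoin (RatFunc (GaloisField 2 n))
        ({u} : Set (AlgebraicClosure (RatFunc (GaloisField 2 n))))))) := by
  have h2 : (2 : GaloisField 2 n) = 0 := by
    exact_mod_cast CharP.cast_eq_zero (GaloisField 2 n) 2
  obtain ⟨s1, s2, s3, hσ1, hσ2, hσ3⟩ := resolvent_roots_stmt8 b c hc0 h2 (by rwa [Polynomial.map_id] at hR3)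
  -- determine L explicitly
  have hB2 : α^6 + a4*α^2 + a5*α = α^2*b := by
    rw [hb]; field_simp
  have hC1 : a5*α^3 + a7*α = α^2*c := by
    rw [hc]; field_simp
  have hcomp := L0_comp_stmt8 n a2 a4 a5 a6 a7 a8 a9 a10 α
  have hzero : (L - (C (α^2) * X^4 + C (α^6 + a4*α^2 + a5*α) * X^2 + C (a5*α^3 + a7*α) * X
      + C (α^10 + a2*α^8 + a4*α^6 + a5*α^5 + a6*α^4 + a7*α^3 + a8*α^2 + a9*α))).comp
      (X ^ 2 + C α * X) = 0 := by
    rw [sub_comp, hL, hf, hcomp, sub_self]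
  have hL0 : L = C (α^2) * X^4 + C (α^2*b) * X^2 + C (α^2*c) * X
      + C (α^10 + a2*α^8 + a4*α^6 + a5*α^5 + a6*α^4 + a7*α^3 + a8*α^2 + a9*α) := by
    rcases Polynomial.comp_eq_zero_iff.mp hzero with h | ⟨-, hconst⟩
    · rw [← hB2, ← hC1]
      exact sub_eq_zero.mp h
    · exfalso
      have h1 := congrArg (fun p => Polynomial.coeff p 2) hconst
      simp only [coeff_add, coeff_C_mul, coeff_X_pow, coeff_C, coeff_X] at h1
      norm_num at h1
  rw [hq, hL0] at hu
  simp only [Polynomial.map_add, Polynomial.map_mul, Polynomial.map_pow, Polynomial.map_X,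
    Polynomial.map_C, map_sub, map_add, map_mul, map_pow, aeval_X, aeval_C] at hu
  set K' := IntermediateField.adjoin (RatFunc (GaloisField 2 n))
      ({u} : Set (AlgebraicClosure (RatFunc (GaloisField 2 n)))) with hK'
  have humem : u ∈ K' := IntermediateField.subset_adjoin _ _ rfl
  set U : K' := ⟨u, humem⟩ with hU
  set φ : GaloisField 2 n →+* K' :=
    (algebraMap (RatFunc (GaloisField 2 n)) K').comp RatFunc.C with hφ
  set T : K' := algebraMap (RatFunc (GaloisField 2 n)) K' RatFunc.X with hT
  have h2K : (2 : K') = 0 := by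
    have h := congrArg φ h2
    rwa [map_ofNat, map_zero] at h
  have H1K : φ s1 + φ s2 + φ s3 = 0 := by
    have h := congrArg φ hσ1
    simpa only [map_add, map_mul, map_zero] using h
  have H2K : φ s1 * φ s2 + φ s1 * φ s3 + φ s2 * φ s3 = φ b := by
    have h := congrArg φ hσ2
    simpa only [map_add, map_mul] using h
  have H3K : φ s1 * φ s2 * φ s3 = φ c := by
    have h := congrArg φ hσ3
    simpa only [map_add, map_mul] using h
  have H4 : (φ α)^2 * U^4 + (φ α)^2 * (φ b) * U^2 + (φ α)^2 * (φ c) * U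
      + φ (α^10 + a2*α^8 + a4*α^6 + a5*α^5 + a6*α^4 + a7*α^3 + a8*α^2 + a9*α) = T := by
    apply (algebraMap K' (AlgebraicClosure (RatFunc (GaloisField 2 n)))).injective
    simp only [map_add, map_mul, map_pow, hφ, hT, RingHom.comp_apply,
      ← IsScalarTower.algebraMap_apply, hU, IntermediateField.algebraMap_apply]
    linear_combination hu
  -- factor q over K'
  have hmapq : q.map (algebraMap (RatFunc (GaloisField 2 n)) K')
      = C ((φ α)^2) * ((X - C U) * ((X - C (U + φ s1)) *
          ((X - C (U + φ s2)) * (X - C (U + φ s3))))) := by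
    have hfk := factor_key_stmt8 (φ α) (φ b) (φ c)
      (φ (α^10 + a2*α^8 + a4*α^6 + a5*α^5 + a6*α^4 + a7*α^3 + a8*α^2 + a9*α)) T U
      (φ s1) (φ s2) (φ s3) h2K H1K H2K H3K H4
    rw [hq, hL0, Polynomial.map_sub, Polynomial.map_map, Polynomial.map_C]
    simp only [Polynomial.map_add, Polynomial.map_mul, Polynomial.map_pow, Polynomial.map_X,
      Polynomial.map_C, map_add, map_mul, map_pow]
    rw [← hT]
    have hconsts : ∀ x : GaloisField 2 n,
        ((algebraMap (RatFunc (GaloisField 2 n)) K').comp RatFunc.C) x = φ x := fun _ => rfl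
    simp only [hconsts]
    simp only [map_add, map_mul, map_pow] at hfk
    linear_combination hfk
  rw [hmapq]
  exact (Splits.C _).mul ((Splits.X_sub_C _).mul
    ((Splits.X_sub_C _).mul ((Splits.X_sub_C _).mul (Splits.X_sub_C _))))
end
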